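/- arXiv:math/0612737 — 5 statements merged into one kernel-verified Lean document; each statement's English description precedes it below -/
import Mathlib

section
/- Let H be a quasitriangular Hopf algebra with antipode γ, R-matrix R, involutive coalgebra anti-algebra automorphism τ, and let S ∈ H⊗A be a universal S-matrix with (ε⊗id)(S) = 1, where A is an associative unital algebra. Then S is invertible in H⊗A with inverse S⁻¹ = ((γτ)(R₁)⊗1)·(γ⊗id)(S)·(R₂⊗1), where R = R₁⊗R₂ (implicit summation). -/
open TensorProduct

section QT

variable (k H : Type*) [Field k] [Ring H] [Bialgebra k H]

/-- `(Δ ⊗ id)` as a map `H ⊗ H → H ⊗ (H ⊗ H)`. -/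
noncomputable def deltaL : H ⊗[k] H →ₗ[k] H ⊗[k] (H ⊗[k] H) :=
  (TensorProduct.assoc k H H H).toLinearMap ∘ₗ
    TensorProduct.map (Coalgebra.comul (R := k)) LinearMap.id

/-- `(id ⊗ Δ)` as a map `H ⊗ H → H ⊗ (H ⊗ H)`. -/
noncomputable def deltaR : H ⊗[k] H →ₗ[k] H ⊗[k] (H ⊗[k] H) :=
  TensorProduct.map LinearMap.id (Coalgebra.comul (R := k))

/-- embedding of `H ⊗ H` on legs 1, 2 of `H ⊗ H ⊗ H`. -/
noncomputable def leg12 : H ⊗[k] H →ₗ[k] H ⊗[k] (H ⊗[k] H) :=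
  TensorProduct.map LinearMap.id ((TensorProduct.mk k H H).flip (1 : H))

/-- embedding of `H ⊗ H` on legs 1, 3 of `H ⊗ H ⊗ H`. -/
noncomputable def leg13 : H ⊗[k] H →ₗ[k] H ⊗[k] (H ⊗[k] H) :=
  TensorProduct.map LinearMap.id (TensorProduct.mk k H H (1 : H))

/-- embedding of `H ⊗ H` on legs 2, 3 of `H ⊗ H ⊗ H`. -/
noncomputable def leg23 : H ⊗[k] H →ₗ[k] H ⊗[k] (H ⊗[k] H) :=
  TensorProduct.mk k H (H ⊗[k] H) (1 : H)

/-- `R` (with two-sided inverse `Rinv`) is a universal R-matrix (quasitriangular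
structure) on the bialgebra `H`. -/
noncomputable def IsUnivRMatrix (R Rinv : H ⊗[k] H) : Prop :=
  R * Rinv = 1 ∧ Rinv * R = 1 ∧
  deltaL k H R = leg13 k H R * leg23 k H R ∧
  deltaR k H R = leg13 k H R * leg12 k H R ∧
  ∀ h : H, R * Coalgebra.comul h =
    (TensorProduct.comm k H H) (Coalgebra.comul h) * R

/-- `τ` is an involutive coalgebra map and algebra anti-automorphism of `H`. -/
noncomputable def IsSkewInvolution (τ : H →ₗ[k] H) : Prop :=
  (∀ x : H, τ (τ x) = x) ∧ (∀ x y : H, τ (x * y) = τ y * τ x) ∧ τ 1 = 1 ∧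
  Coalgebra.comul (R := k) ∘ₗ τ = (TensorProduct.map τ τ) ∘ₗ Coalgebra.comul ∧
  Coalgebra.counit (R := k) ∘ₗ τ = Coalgebra.counit

end QT

section SMat

variable (k H A : Type*) [Field k] [Ring H] [Bialgebra k H] [Ring A] [Algebra k A]

/-- `(Δ ⊗ id) : H ⊗ A → H ⊗ (H ⊗ A)`. -/
noncomputable def deltaLA : H ⊗[k] A →ₗ[k] H ⊗[k] (H ⊗[k] A) :=
  (TensorProduct.assoc k H H A).toLinearMap ∘ₗ
    TensorProduct.map (Coalgebra.comul (R := k)) LinearMap.id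

/-- `(Δ^op ⊗ id) : H ⊗ A → H ⊗ (H ⊗ A)`. -/
noncomputable def deltaOpLA : H ⊗[k] A →ₗ[k] H ⊗[k] (H ⊗[k] A) :=
  (TensorProduct.assoc k H H A).toLinearMap ∘ₗ
    TensorProduct.map ((TensorProduct.comm k H H).toLinearMap ∘ₗ Coalgebra.comul (R := k))
      LinearMap.id

/-- embedding of `H ⊗ A` on legs 1, 3 of `H ⊗ H ⊗ A`:  `S ↦ S₁₃`. -/
noncomputable def sleg13 : H ⊗[k] A →ₗ[k] H ⊗[k] (H ⊗[k] A) :=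
  TensorProduct.map LinearMap.id (TensorProduct.mk k H A (1 : H))

/-- embedding of `H ⊗ A` on legs 2, 3 of `H ⊗ H ⊗ A`:  `S ↦ S₂₃`. -/
noncomputable def sleg23 : H ⊗[k] A →ₗ[k] H ⊗[k] (H ⊗[k] A) :=
  TensorProduct.mk k H (H ⊗[k] A) (1 : H)

/-- embedding of `H ⊗ H` on legs 1, 2 of `H ⊗ H ⊗ A`:  `R ↦ R₁₂`. -/
noncomputable def rleg12 : H ⊗[k] H →ₗ[k] H ⊗[k] (H ⊗[k] A) :=
  TensorProduct.map LinearMap.id ((TensorProduct.mk k H A).flip (1 : A))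

/-- `S ∈ H ⊗ A` is a universal S-matrix for `(H, R, τ)`: it satisfies the
characteristic identity `(Δ⊗id)(S) = S₁₃ R'₁₂ S₂₃` where `R' = (τ⊗id)(R)`. -/
noncomputable def IsSMatrix (R : H ⊗[k] H) (τ : H →ₗ[k] H) (S : H ⊗[k] A) : Prop :=
  deltaLA k H A S =
    sleg13 k H A S * rleg12 k H A ((TensorProduct.map τ LinearMap.id) R) * sleg23 k H A S

/-- `(ε ⊗ id) : H ⊗ A → A`. -/
noncomputable def epsA : H ⊗[k] A →ₗ[k] A :=
  (TensorProduct.lid k A).toLinearMap ∘ₗ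
    TensorProduct.map (Coalgebra.counit (R := k)) LinearMap.id

end SMat

section Sandwich

variable (k H A : Type*) [Field k] [Ring H] [Bialgebra k H] [Ring A] [Algebra k A]

/-- multiply an extra `H`-leg into the `H`-leg of `H ⊗ A`:  `a ⊗ (h ⊗ x) ↦ (a*h) ⊗ x`. -/
noncomputable def mulIn : H ⊗[k] (H ⊗[k] A) →ₗ[k] H ⊗[k] A :=
  (TensorProduct.map (LinearMap.mul' k H) LinearMap.id) ∘ₗ
    (TensorProduct.assoc k H H A).symm.toLinearMap

/-- embedding of `H ⊗ H` on legs 1, 3 of `H ⊗ H ⊗ H ⊗ A`. -/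
noncomputable def qleg13 : H ⊗[k] H →ₗ[k] H ⊗[k] (H ⊗[k] (H ⊗[k] A)) :=
  TensorProduct.map LinearMap.id
    ((TensorProduct.mk k H (H ⊗[k] A) (1 : H)) ∘ₗ ((TensorProduct.mk k H A).flip (1 : A)))

/-- embedding of `H ⊗ A` on legs 2, 4 of `H ⊗ H ⊗ H ⊗ A`. -/
noncomputable def qleg24 : H ⊗[k] A →ₗ[k] H ⊗[k] (H ⊗[k] (H ⊗[k] A)) :=
  (TensorProduct.mk k H (H ⊗[k] (H ⊗[k] A)) (1 : H)) ∘ₗ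
    TensorProduct.map LinearMap.id (TensorProduct.mk k H A (1 : H))

/-- multiply the three `H`-legs of `H ⊗ H ⊗ H ⊗ A` together (in order). -/
noncomputable def collapse : H ⊗[k] (H ⊗[k] (H ⊗[k] A)) →ₗ[k] H ⊗[k] A :=
  mulIn k H A ∘ₗ TensorProduct.map LinearMap.id (mulIn k H A)

/-- the sandwich `Σ (u₁ ⊗ 1) · S · (u₂ ⊗ 1)` for `u ∈ H ⊗ H`, `S ∈ H ⊗ A`. -/
noncomputable def sandwich (u : H ⊗[k] H) (S : H ⊗[k] A) : H ⊗[k] A :=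
  collapse k H A (qleg13 k H A u * qleg24 k H A S)

end Sandwich

/-!
Apply `m ∘ (γ ⊗ id)` to the first two `H`-legs of `(Δ ⊗ id)(S) = S₁₃ R'₁₂ S₂₃`. On the left the
antipode axiom and `(ε ⊗ id)(S) = 1` leave `1`; on the right, since `γ` reverses products,
`γ(S₁ R'₁) R'₂ S'₁ ⊗ S₂ S'₂ = (γ(R'₁) γ(S₁) R'₂ ⊗ S₂)(S'₁ ⊗ S'₂)` (with `S'` a second copy
of `S`), which is the claimed inverse times `S`. Applying
`m ∘ (id ⊗ γ)` instead gives a right inverse of `S` in the same way, and a left and a right inverse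
coincide.
-/

open Coalgebra HopfAlgebra

section MulLegs

variable {k H A : Type*} [Field k] [Ring H] [Bialgebra k H] [Ring A] [Algebra k A]

-- Through `LinearMap.mul`, because `mul_add` finds no `LeftDistribClass` instance on the
-- four-fold tensor product.
lemma sandwich_eq_collapse_mul (u : H ⊗[k] H) (S : H ⊗[k] A) :
    sandwich k H A u S = collapse k H A
      (LinearMap.mul k (H ⊗[k] (H ⊗[k] (H ⊗[k] A))) (qleg13 k H A u) (qleg24 k H A S)) :=
  rfl

lemma sandwich_zero_left (S : H ⊗[k] A) : sandwich k H A 0 S = 0 := by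
  simp only [sandwich_eq_collapse_mul, map_zero, LinearMap.zero_apply]

lemma sandwich_zero_right (u : H ⊗[k] H) : sandwich k H A u 0 = 0 := by
  simp only [sandwich_eq_collapse_mul, map_zero]

lemma sandwich_add_left (u v : H ⊗[k] H) (S : H ⊗[k] A) :
    sandwich k H A (u + v) S = sandwich k H A u S + sandwich k H A v S := by
  simp only [sandwich_eq_collapse_mul, map_add, LinearMap.add_apply]

lemma sandwich_add_right (u : H ⊗[k] H) (S S' : H ⊗[k] A) :
    sandwich k H A u (S + S') = sandwich k H A u S + sandwich k H A u S' := by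
  simp only [sandwich_eq_collapse_mul, map_add]

variable (k H A) in
noncomputable def mulLegs (f g : H →ₗ[k] H) : H ⊗[k] (H ⊗[k] A) →ₗ[k] H ⊗[k] A :=
  mulIn k H A ∘ₗ TensorProduct.map f (TensorProduct.map g LinearMap.id)

@[simp]
lemma mulLegs_tmul (f g : H →ₗ[k] H) (x y : H) (a : A) :
    mulLegs k H A f g (x ⊗ₜ (y ⊗ₜ a)) = (f x * g y) ⊗ₜ a := by
  simp [mulLegs, mulIn]

lemma mulLegs_deltaLA_tmul (f g : H →ₗ[k] H) (h : H) (a : A) :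
    mulLegs k H A f g (deltaLA k H A (h ⊗ₜ a)) =
      LinearMap.mul' k H (TensorProduct.map f g (comul h)) ⊗ₜ a := by
  simp only [deltaLA, LinearMap.comp_apply, TensorProduct.map_tmul, LinearMap.id_apply,
    LinearEquiv.coe_coe]
  induction (comul (R := k) h) using TensorProduct.induction_on with
  | zero => simp
  | tmul => simp
  | add x y hx hy => simp [TensorProduct.add_tmul, hx, hy]

end MulLegs

section Antipode

variable {k H A : Type*} [Field k] [Ring H] [HopfAlgebra k H] [Ring A] [Algebra k A]

lemma mulLegs_antipode_id_deltaLA (S : H ⊗[k] A) :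
    mulLegs k H A (antipode k) LinearMap.id (deltaLA k H A S) = 1 ⊗ₜ epsA k H A S := by
  induction S using TensorProduct.induction_on with
  | zero => simp
  | tmul h a =>
    rw [mulLegs_deltaLA_tmul, ← LinearMap.rTensor_def, mul_antipode_rTensor_comul_apply]
    simp [epsA, Algebra.algebraMap_eq_smul_one, TensorProduct.smul_tmul]
  | add x y hx hy => simp [TensorProduct.tmul_add, hx, hy]

lemma mulLegs_id_antipode_deltaLA (S : H ⊗[k] A) :
    mulLegs k H A LinearMap.id (antipode k) (deltaLA k H A S) = 1 ⊗ₜ epsA k H A S := by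
  induction S using TensorProduct.induction_on with
  | zero => simp
  | tmul h a =>
    rw [mulLegs_deltaLA_tmul, ← LinearMap.lTensor_def, mul_antipode_lTensor_comul_apply]
    simp [epsA, Algebra.algebraMap_eq_smul_one, TensorProduct.smul_tmul]
  | add x y hx hy => simp [TensorProduct.tmul_add, hx, hy]

lemma mulLegs_antipode_id_sleg13_mul_rleg12_mul_sleg23 (S S' : H ⊗[k] A) (u : H ⊗[k] H) :
    mulLegs k H A (antipode k) LinearMap.id
        (sleg13 k H A S * rleg12 k H A u * sleg23 k H A S') =
      sandwich k H A (TensorProduct.map (antipode k) LinearMap.id u)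
        (TensorProduct.map (antipode k) LinearMap.id S) * S' := by
  induction S using TensorProduct.induction_on with
  | zero => simp [sandwich_zero_right]
  | add x y hx hy => simp only [map_add, add_mul, hx, hy, sandwich_add_right]
  | tmul h a =>
    induction u using TensorProduct.induction_on with
    | zero => simp [sandwich_zero_left]
    | add x y hx hy => simp only [map_add, add_mul, mul_add, hx, hy, sandwich_add_left]
    | tmul r s =>
      induction S' using TensorProduct.induction_on with
      | zero => simp
      | add x y hx hy => simp only [map_add, mul_add, hx, hy]
      | tmul g b =>
        simp [sleg13, rleg12, sleg23, sandwich, collapse, qleg13, qleg24, mulIn,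
          Algebra.TensorProduct.tmul_mul_tmul, antipode_mul_antidistrib, mul_assoc]

lemma mulLegs_id_antipode_sleg13_mul_rleg12_mul_sleg23 (S S' : H ⊗[k] A) (u : H ⊗[k] H) :
    mulLegs k H A LinearMap.id (antipode k)
        (sleg13 k H A S * rleg12 k H A u * sleg23 k H A S') =
      S * sandwich k H A (TensorProduct.map LinearMap.id (antipode k) u)
        (TensorProduct.map (antipode k) LinearMap.id S') := by
  induction S using TensorProduct.induction_on with
  | zero => simp
  | add x y hx hy => simp only [map_add, add_mul, hx, hy]
  | tmul h a =>
    induction u using TensorProduct.induction_on with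
    | zero => simp [sandwich_zero_left]
    | add x y hx hy => simp only [map_add, add_mul, mul_add, hx, hy, sandwich_add_left]
    | tmul r s =>
      induction S' using TensorProduct.induction_on with
      | zero => simp [sandwich_zero_right]
      | add x y hx hy => simp only [map_add, mul_add, hx, hy, sandwich_add_right]
      | tmul g b =>
        simp [sleg13, rleg12, sleg23, sandwich, collapse, qleg13, qleg24, mulIn,
          Algebra.TensorProduct.tmul_mul_tmul, antipode_mul_antidistrib, mul_assoc]

end Antipode

theorem SMatrix_inverse_general
    {k H A : Type*} [Field k] [Ring H] [HopfAlgebra k H] [Ring A] [Algebra k A]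
    (R : H ⊗[k] H)
    (τ : H →ₗ[k] H)
    (S : H ⊗[k] A) (hS : IsSMatrix k H A R τ S)
    (hone : epsA k H A S = 1) :
    S * sandwich k H A
        ((TensorProduct.map ((HopfAlgebra.antipode (R := k) (A := H)) ∘ₗ τ) LinearMap.id) R)
        ((TensorProduct.map (HopfAlgebra.antipode (R := k) (A := H)) LinearMap.id) S) = 1 ∧
    sandwich k H A
        ((TensorProduct.map ((HopfAlgebra.antipode (R := k) (A := H)) ∘ₗ τ) LinearMap.id) R)
        ((TensorProduct.map (HopfAlgebra.antipode (R := k) (A := H)) LinearMap.id) S) * S = 1 := by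
  have hleft := congrArg (mulLegs k H A (antipode k) LinearMap.id) hS
  rw [mulLegs_antipode_id_deltaLA, hone, ← Algebra.TensorProduct.one_def,
    mulLegs_antipode_id_sleg13_mul_rleg12_mul_sleg23, ← LinearMap.comp_apply,
    ← TensorProduct.map_comp, LinearMap.id_comp] at hleft
  have hright := congrArg (mulLegs k H A LinearMap.id (antipode k)) hS
  rw [mulLegs_id_antipode_deltaLA, hone, ← Algebra.TensorProduct.one_def,
    mulLegs_id_antipode_sleg13_mul_rleg12_mul_sleg23] at hright
  rw [← left_inv_eq_right_inv hleft.symm hright.symm] at hright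
  exact ⟨hright.symm, hleft.symm⟩

/-- for a quasitriangular Hopf algebra `H` with antipode `γ`, R-matrix `R`,
involution `τ` and a universal S-matrix `S ∈ H ⊗ A` with `(ε⊗id)(S) = 1`, the matrix `S`
is invertible in `H ⊗ A` with inverse `S⁻¹ = ((γτ)(R₁) ⊗ 1) · (γ⊗id)(S) · (R₂ ⊗ 1)`
(implicit summation over `R = R₁ ⊗ R₂`). -/
theorem SMatrix_inverse
    {k H A : Type*} [Field k] [Ring H] [HopfAlgebra k H] [Ring A] [Algebra k A]
    (R Rinv : H ⊗[k] H) (hR : IsUnivRMatrix k H R Rinv)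
    (τ : H →ₗ[k] H) (hτ : IsSkewInvolution k H τ)
    (S : H ⊗[k] A) (hS : IsSMatrix k H A R τ S)
    (hone : epsA k H A S = 1) :
    S * sandwich k H A
        ((TensorProduct.map ((HopfAlgebra.antipode (R := k) (A := H)) ∘ₗ τ) LinearMap.id) R)
        ((TensorProduct.map (HopfAlgebra.antipode (R := k) (A := H)) LinearMap.id) S) = 1 ∧
    sandwich k H A
        ((TensorProduct.map ((HopfAlgebra.antipode (R := k) (A := H)) ∘ₗ τ) LinearMap.id) R)
        ((TensorProduct.map (HopfAlgebra.antipode (R := k) (A := H)) LinearMap.id) S) * S = 1 :=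
  SMatrix_inverse_general R τ S hS hone
end

section
/- Let H be a quasitriangular bialgebra with R-matrix R and involution τ (involutive coalgebra map and algebra anti-automorphism), and let S ∈ H⊗A satisfy (Δ⊗id)(S) = S₁₃ R'₁₂ S₂₃ where R' = (τ⊗id)(R). Then S satisfies the universal reflection equation R₁₂ S₁ R'₁₂ S₂ = S₂ R''₁₂ S₁ R₁₂ in H⊗H⊗A, where R'' = (R')₂₁, S₁ = S₁₃, S₂ = S₂₃. -/
open TensorProduct

/-!
Multiplying the characteristic identity on the left by `R₁₂` gives
`R₁₂ S₁ R'₁₂ S₂ = R₁₂ (Δ ⊗ id)(S)`, and the intertwining property `R Δ = Δ^op R`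
turns this into `(Δ^op ⊗ id)(S) R₁₂`. Flipping the first two legs is an algebra
automorphism of `H ⊗ H ⊗ A` that carries `(Δ ⊗ id)(S)` to `(Δ^op ⊗ id)(S)`, swaps `S₁`
and `S₂` and sends `R'₁₂` to `R''₁₂`; applied to the characteristic identity it gives
`(Δ^op ⊗ id)(S) = S₂ R''₁₂ S₁`.
-/

namespace Algebra.TensorProduct

section

variable {k B C A : Type*} [CommSemiring k] [AddCommMonoid B] [Module k B] [Semiring C]
  [Algebra k C] [Semiring A] [Algebra k A]

theorem tmul_one_mul_map_eq_map_mul_tmul_one (x : C) {f g : B →ₗ[k] C}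
    (h : ∀ b, x * f b = g b * x) (S : B ⊗[k] A) :
    (x ⊗ₜ[k] (1 : A)) * _root_.TensorProduct.map f LinearMap.id S =
      _root_.TensorProduct.map g LinearMap.id S * (x ⊗ₜ[k] (1 : A)) := by
  induction S using TensorProduct.induction_on with
  | zero => simp
  | tmul b a => simp [h]
  | add S T hS hT => simp only [map_add, mul_add, add_mul, hS, hT]

end

variable {k B C D : Type*} [CommSemiring k] [Semiring B] [Algebra k B] [Semiring C]
  [Algebra k C] [Semiring D] [Algebra k D]

theorem leftComm_assoc (z : (B ⊗[k] C) ⊗[k] D) :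
    leftComm k B C D (Algebra.TensorProduct.assoc k k k B C D z) =
      Algebra.TensorProduct.assoc k k k C B D
        (_root_.TensorProduct.map (_root_.TensorProduct.comm k B C).toLinearMap
          LinearMap.id z) := by
  have h : (leftComm k B C D).toLinearMap ∘ₗ
        (Algebra.TensorProduct.assoc k k k B C D).toLinearMap =
      (Algebra.TensorProduct.assoc k k k C B D).toLinearMap ∘ₗ
        _root_.TensorProduct.map (_root_.TensorProduct.comm k B C).toLinearMap LinearMap.id :=
    TensorProduct.ext_threefold fun _ _ _ => rfl
  exact LinearMap.congr_fun h z

end Algebra.TensorProduct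

section ReflectionEquation

variable {k H A : Type*} [Field k] [Ring H] [Bialgebra k H] [Ring A] [Algebra k A]

theorem rleg12_eq_assoc (x : H ⊗[k] H) :
    rleg12 k H A x = Algebra.TensorProduct.assoc k k k H H A (x ⊗ₜ 1) := by
  induction x using TensorProduct.induction_on with
  | zero => simp
  | tmul a b => rfl
  | add x y hx hy => simp only [map_add, add_tmul, hx, hy]

theorem deltaLA_eq_assoc (S : H ⊗[k] A) :
    deltaLA k H A S = Algebra.TensorProduct.assoc k k k H H A
      (TensorProduct.map (Coalgebra.comul (R := k)) LinearMap.id S) :=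
  rfl

theorem deltaOpLA_eq_assoc (S : H ⊗[k] A) :
    deltaOpLA k H A S = Algebra.TensorProduct.assoc k k k H H A
      (TensorProduct.map ((TensorProduct.comm k H H).toLinearMap ∘ₗ Coalgebra.comul (R := k))
        LinearMap.id S) :=
  rfl

theorem rleg12_mul_deltaLA {R : H ⊗[k] H}
    (hR : ∀ h : H, R * Coalgebra.comul h = TensorProduct.comm k H H (Coalgebra.comul h) * R)
    (S : H ⊗[k] A) :
    rleg12 k H A R * deltaLA k H A S = deltaOpLA k H A S * rleg12 k H A R := by
  rw [rleg12_eq_assoc, deltaLA_eq_assoc, deltaOpLA_eq_assoc, ← map_mul, ← map_mul,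
    Algebra.TensorProduct.tmul_one_mul_map_eq_map_mul_tmul_one R
      (g := (TensorProduct.comm k H H).toLinearMap ∘ₗ Coalgebra.comul) hR]

theorem leftComm_deltaLA (S : H ⊗[k] A) :
    Algebra.TensorProduct.leftComm k H H A (deltaLA k H A S) = deltaOpLA k H A S := by
  rw [deltaLA_eq_assoc, Algebra.TensorProduct.leftComm_assoc, deltaOpLA_eq_assoc,
    ← LinearMap.comp_apply, ← TensorProduct.map_comp, LinearMap.id_comp]

theorem leftComm_sleg13 (S : H ⊗[k] A) :
    Algebra.TensorProduct.leftComm k H H A (sleg13 k H A S) = sleg23 k H A S := by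
  induction S using TensorProduct.induction_on with
  | zero => simp
  | tmul t a => rfl
  | add S T hS hT => simp only [map_add, hS, hT]

theorem leftComm_sleg23 (S : H ⊗[k] A) :
    Algebra.TensorProduct.leftComm k H H A (sleg23 k H A S) = sleg13 k H A S := by
  induction S using TensorProduct.induction_on with
  | zero => simp
  | tmul t a => rfl
  | add S T hS hT => simp only [map_add, hS, hT]

theorem leftComm_rleg12 (x : H ⊗[k] H) :
    Algebra.TensorProduct.leftComm k H H A (rleg12 k H A x) =
      rleg12 k H A (TensorProduct.comm k H H x) := by
  induction x using TensorProduct.induction_on with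
  | zero => simp
  | tmul a b => rfl
  | add x y hx hy => simp only [map_add, hx, hy]

theorem deltaOpLA_eq_of_isSMatrix {R : H ⊗[k] H} {τ : H →ₗ[k] H} {S : H ⊗[k] A}
    (hS : IsSMatrix k H A R τ S) :
    deltaOpLA k H A S = sleg23 k H A S *
      rleg12 k H A (TensorProduct.comm k H H (TensorProduct.map τ LinearMap.id R)) *
        sleg13 k H A S := by
  rw [← leftComm_deltaLA, hS, map_mul, map_mul, leftComm_sleg13, leftComm_sleg23,
    leftComm_rleg12]

end ReflectionEquation

theorem SMatrix_reflection_equation_general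
    {k H A : Type*} [Field k] [Ring H] [Bialgebra k H] [Ring A] [Algebra k A]
    (R Rinv : H ⊗[k] H) (hR : IsUnivRMatrix k H R Rinv)
    (τ : H →ₗ[k] H)
    (S : H ⊗[k] A) (hS : IsSMatrix k H A R τ S) :
    rleg12 k H A R * sleg13 k H A S *
        rleg12 k H A ((TensorProduct.map τ LinearMap.id) R) * sleg23 k H A S =
      sleg23 k H A S *
        rleg12 k H A ((TensorProduct.comm k H H) ((TensorProduct.map τ LinearMap.id) R)) *
        sleg13 k H A S * rleg12 k H A R := by
  calc _ = rleg12 k H A R * deltaLA k H A S := by rw [hS]; simp only [mul_assoc]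
    _ = deltaOpLA k H A S * rleg12 k H A R := rleg12_mul_deltaLA hR.2.2.2.2 S
    _ = _ := by rw [deltaOpLA_eq_of_isSMatrix hS]

/-- a universal S-matrix `S ∈ H ⊗ A` (satisfying the characteristic identity
`(Δ⊗id)(S) = S₁₃ R'₁₂ S₂₃`, `R' = (τ⊗id)(R)`) satisfies the universal reflection equation
`R₁₂ S₁ R'₁₂ S₂ = S₂ R''₁₂ S₁ R₁₂` in `H ⊗ H ⊗ A`, where `R'' = (R')₂₁`. -/
theorem SMatrix_reflection_equation
    {k H A : Type*} [Field k] [Ring H] [Bialgebra k H] [Ring A] [Algebra k A]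
    (R Rinv : H ⊗[k] H) (hR : IsUnivRMatrix k H R Rinv)
    (τ : H →ₗ[k] H) (hτ : IsSkewInvolution k H τ)
    (S : H ⊗[k] A) (hS : IsSMatrix k H A R τ S) :
    rleg12 k H A R * sleg13 k H A S *
        rleg12 k H A ((TensorProduct.map τ LinearMap.id) R) * sleg23 k H A S =
      sleg23 k H A S *
        rleg12 k H A ((TensorProduct.comm k H H) ((TensorProduct.map τ LinearMap.id) R)) *
        sleg13 k H A S * rleg12 k H A R :=
  SMatrix_reflection_equation_general R Rinv hR τ S hS
end

section
/- Let H be a finite-dimensional quasitriangular bialgebra with R-matrix R, and let I ⊆ H* be the subspace of invariant elements, i.e. those a ∈ H* with h⇀a = a↼h for all h ∈ H (where ⇀ and ↼ are the left and right coregular actions dual to right and left multiplication). Then I is a commutative subalgebra of H*. -/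
open TensorProduct

section DualAlg

variable (k H : Type*) [Field k] [Ring H] [Bialgebra k H]

/-- convolution product on the dual `H* = Module.Dual k H`. -/
noncomputable def conv (f g : Module.Dual k H) : Module.Dual k H :=
  (LinearMap.mul' k k) ∘ₗ (TensorProduct.map f g) ∘ₗ (Coalgebra.comul (R := k))

/-- left coregular action `h ⇀ a`, `(h ⇀ a)(x) = a (x * h)`. -/
noncomputable def lact (h : H) (a : Module.Dual k H) : Module.Dual k H :=
  a ∘ₗ LinearMap.mulRight k h

/-- right coregular action `a ↼ h`, `(a ↼ h)(x) = a (h * x)`. -/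
noncomputable def ract (a : Module.Dual k H) (h : H) : Module.Dual k H :=
  a ∘ₗ LinearMap.mulLeft k h

/-- an invariant element of `H*`: `h ⇀ a = a ↼ h` for all `h`. -/
noncomputable def IsInvariantDual (a : Module.Dual k H) : Prop :=
  ∀ h : H, lact k H h a = ract k H a h

end DualAlg

/-!
An element `a ∈ H*` is invariant exactly when it is a trace, `a (x * y) = a (y * x)`.
Traces pull back along algebra maps and `a ⊗ b` is a trace on `H ⊗ H` when `a` and `b` are,
so `ε` and `a * b = (a ⊗ b) ∘ Δ` are traces. For commutativity, quasitriangularity says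
that `Δ x` is conjugate by `R` to the flipped `Δᵒᵖ x`, and a trace cannot see the conjugation:
`(a ⊗ b) (Δ x) = (a ⊗ b) (Δᵒᵖ x) = (b ⊗ a) (Δ x)`.
-/

section Tracial

variable {k A B : Type*} [CommRing k]

def IsTracial [Ring A] [Algebra k A] (f : A →ₗ[k] k) : Prop :=
  ∀ x y : A, f (x * y) = f (y * x)

theorem AlgHom.isTracial [Ring A] [Algebra k A] (φ : A →ₐ[k] k) : IsTracial φ.toLinearMap :=
  fun x y => by simp only [AlgHom.toLinearMap_apply, map_mul, mul_comm]

theorem IsTracial.comp_algHom [Ring A] [Algebra k A] [Ring B] [Algebra k B] {f : B →ₗ[k] k}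
    (hf : IsTracial f) (φ : A →ₐ[k] B) : IsTracial (f ∘ₗ φ.toLinearMap) :=
  fun x y => by simp only [LinearMap.comp_apply, AlgHom.toLinearMap_apply, map_mul, hf (φ x)]

theorem IsTracial.apply_mul_mul_eq_of_mul_eq_one [Ring A] [Algebra k A] {f : A →ₗ[k] k}
    (hf : IsTracial f) {u v : A} (huv : u * v = 1) (x : A) : f (v * x * u) = f x := by
  rw [mul_assoc, hf, mul_assoc, huv, mul_one]

theorem IsTracial.tensorProduct [Ring A] [Algebra k A] [Ring B] [Algebra k B]
    {a : A →ₗ[k] k} {b : B →ₗ[k] k} (ha : IsTracial a) (hb : IsTracial b) :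
    IsTracial (LinearMap.mul' k k ∘ₗ TensorProduct.map a b) := by
  intro u v
  induction u using TensorProduct.induction_on with
  | zero => simp only [zero_mul, mul_zero]
  | add u₁ u₂ h₁ h₂ => simp only [add_mul, mul_add, map_add, h₁, h₂]
  | tmul x y =>
    induction v using TensorProduct.induction_on with
    | zero => simp only [zero_mul, mul_zero]
    | add v₁ v₂ h₁ h₂ => simp only [add_mul, mul_add, map_add, h₁, h₂]
    | tmul z w =>
      simp only [Algebra.TensorProduct.tmul_mul_tmul, LinearMap.comp_apply,
        TensorProduct.map_tmul, LinearMap.mul'_apply, ha x, hb y]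

theorem mul'_comp_map_comp_comm {M N : Type*} [AddCommGroup M] [Module k M]
    [AddCommGroup N] [Module k N] (a : M →ₗ[k] k) (b : N →ₗ[k] k) :
    LinearMap.mul' k k ∘ₗ TensorProduct.map a b ∘ₗ (TensorProduct.comm k N M).toLinearMap =
      LinearMap.mul' k k ∘ₗ TensorProduct.map b a :=
  TensorProduct.ext' fun y x => by simp [mul_comm]

end Tracial

section Bialgebra

variable {k H : Type*} [Field k] [Ring H] [Bialgebra k H]

theorem isInvariantDual_iff_isTracial {a : Module.Dual k H} :
    IsInvariantDual k H a ↔ IsTracial a := by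
  simp only [IsInvariantDual, IsTracial, lact, ract, LinearMap.ext_iff, LinearMap.comp_apply,
    LinearMap.mulRight_apply, LinearMap.mulLeft_apply]
  exact forall_comm

theorem conv_eq_comp_comulAlgHom (a b : Module.Dual k H) :
    conv k H a b =
      (LinearMap.mul' k k ∘ₗ TensorProduct.map a b) ∘ₗ (Bialgebra.comulAlgHom k H).toLinearMap :=
  rfl

theorem IsUnivRMatrix.comul_eq {R Rinv : H ⊗[k] H} (hR : IsUnivRMatrix k H R Rinv) (x : H) :
    Coalgebra.comul x = Rinv * TensorProduct.comm k H H (Coalgebra.comul x) * R := by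
  obtain ⟨-, hRinv_mul, -, -, hflip⟩ := hR
  rw [mul_assoc, ← hflip x, ← mul_assoc, hRinv_mul, one_mul]

theorem IsUnivRMatrix.conv_comm {R Rinv : H ⊗[k] H} (hR : IsUnivRMatrix k H R Rinv)
    {a b : Module.Dual k H} (ha : IsTracial a) (hb : IsTracial b) :
    conv k H a b = conv k H b a := by
  ext x
  calc conv k H a b x
      = (LinearMap.mul' k k ∘ₗ TensorProduct.map a b)
          (Rinv * TensorProduct.comm k H H (Coalgebra.comul x) * R) := by
        rw [← hR.comul_eq]; rfl
    _ = (LinearMap.mul' k k ∘ₗ TensorProduct.map a b)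
          (TensorProduct.comm k H H (Coalgebra.comul x)) :=
        (ha.tensorProduct hb).apply_mul_mul_eq_of_mul_eq_one hR.1 _
    _ = conv k H b a x := congr($(mul'_comp_map_comp_comm a b) (Coalgebra.comul x))

end Bialgebra

theorem invariants_commutative_subalgebra_general
    {k H : Type*} [Field k] [Ring H] [Bialgebra k H]
    (R Rinv : H ⊗[k] H) (hR : IsUnivRMatrix k H R Rinv) :
    IsInvariantDual k H (Coalgebra.counit (R := k) (A := H)) ∧
    (∀ a b : Module.Dual k H, IsInvariantDual k H a → IsInvariantDual k H b →
      IsInvariantDual k H (conv k H a b)) ∧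
    (∀ a b : Module.Dual k H, IsInvariantDual k H a → IsInvariantDual k H b →
      conv k H a b = conv k H b a) := by
  simp only [isInvariantDual_iff_isTracial]
  refine ⟨(Bialgebra.counitAlgHom k H).isTracial, fun a b ha hb => ?_, fun a b ha hb => ?_⟩
  · rw [conv_eq_comp_comulAlgHom]
    exact (ha.tensorProduct hb).comp_algHom _
  · exact hR.conv_comm ha hb

/-- for a finite-dimensional quasitriangular bialgebra `H`, the subspace
`I ⊆ H*` of invariant elements is a commutative subalgebra of the dual algebra `H*`
(with convolution product): it contains the unit `ε`, is closed under convolution,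
and any two invariant elements commute. -/
theorem invariants_commutative_subalgebra
    {k H : Type*} [Field k] [Ring H] [Bialgebra k H] [FiniteDimensional k H]
    (R Rinv : H ⊗[k] H) (hR : IsUnivRMatrix k H R Rinv) :
    IsInvariantDual k H (Coalgebra.counit (R := k) (A := H)) ∧
    (∀ a b : Module.Dual k H, IsInvariantDual k H a → IsInvariantDual k H b →
      IsInvariantDual k H (conv k H a b)) ∧
    (∀ a b : Module.Dual k H, IsInvariantDual k H a → IsInvariantDual k H b →
      conv k H a b = conv k H b a) :=
  invariants_commutative_subalgebra_general R Rinv hR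
end

section
/- Let H be a finite-dimensional quasitriangular bialgebra, let I ⊆ H* be the commutative subalgebra of invariant elements, and let χ ∈ H be a group-like element (Δ(χ) = χ⊗χ, ε(χ) = 1). Then I_χ := χ⇀I = I↼χ, and I_χ is a commutative subalgebra of H*. If χ is invertible in H, then I_χ is isomorphic to I as an algebra. -/
open TensorProduct

section AuxLemmas

variable {k H : Type*} [Field k] [Ring H] [Bialgebra k H]

lemma inv_tracial {a : Module.Dual k H} (ha : IsInvariantDual k H a) :
    ∀ x y : H, a (x * y) = a (y * x) := by
  intro x y
  simpa [lact, ract] using LinearMap.congr_fun (ha y) x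

lemma F_tracial (a b : Module.Dual k H)
    (ha : ∀ x y : H, a (x * y) = a (y * x)) (hb : ∀ x y : H, b (x * y) = b (y * x)) :
    ∀ u v : H ⊗[k] H,
      (LinearMap.mul' k k ∘ₗ TensorProduct.map a b) (u * v)
        = (LinearMap.mul' k k ∘ₗ TensorProduct.map a b) (v * u) := by
  intro u v
  induction u using TensorProduct.induction_on with
  | zero => simp
  | tmul x y =>
    induction v using TensorProduct.induction_on with
    | zero => simp
    | tmul x' y' =>
      simp only [Algebra.TensorProduct.tmul_mul_tmul, LinearMap.comp_apply,
        TensorProduct.map_tmul, LinearMap.mul'_apply]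
      rw [ha x x', hb y y']
    | add v1 v2 h1 h2 => simp only [mul_add, add_mul, map_add, h1, h2]
  | add u1 u2 h1 h2 => simp only [mul_add, add_mul, map_add, h1, h2]

lemma F_comm (a b : Module.Dual k H) (u : H ⊗[k] H) :
    (LinearMap.mul' k k ∘ₗ TensorProduct.map a b) ((TensorProduct.comm k H H) u)
      = (LinearMap.mul' k k ∘ₗ TensorProduct.map b a) u := by
  induction u using TensorProduct.induction_on with
  | zero => simp
  | tmul x y => simp [mul_comm]
  | add u1 u2 h1 h2 => simp only [map_add, h1, h2]

lemma conv_comm_of_invariant (R Rinv : H ⊗[k] H) (h1 : R * Rinv = 1)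
    (h2 : Rinv * R = 1)
    (hint : ∀ h : H, R * Coalgebra.comul h =
      (TensorProduct.comm k H H) (Coalgebra.comul h) * R)
    {a b : Module.Dual k H} (ha : IsInvariantDual k H a) (hb : IsInvariantDual k H b) :
    conv k H a b = conv k H b a := by
  apply LinearMap.ext; intro x
  have hFab := F_tracial a b (inv_tracial ha) (inv_tracial hb)
  have key : (TensorProduct.comm k H H) (Coalgebra.comul (R := k) x)
      = (R * Coalgebra.comul (R := k) x) * Rinv := by
    rw [hint x, mul_assoc, h1, mul_one]
  have : conv k H b a x
      = (LinearMap.mul' k k ∘ₗ TensorProduct.map a b)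
          ((TensorProduct.comm k H H) (Coalgebra.comul (R := k) x)) := by
    rw [F_comm]; rfl
  rw [show conv k H b a x = _ from this, key, hFab,
    ← mul_assoc, h2, one_mul]
  rfl

lemma lact_mul_chi (χ : H) (a b : Module.Dual k H) (u : H ⊗[k] H) :
    (LinearMap.mul' k k ∘ₗ TensorProduct.map a b) (u * (χ ⊗ₜ[k] χ))
      = (LinearMap.mul' k k ∘ₗ
          TensorProduct.map (lact k H χ a) (lact k H χ b)) u := by
  induction u using TensorProduct.induction_on with
  | zero => simp
  | tmul x y =>
    simp [Algebra.TensorProduct.tmul_mul_tmul, lact, LinearMap.mulRight_apply]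
  | add u1 u2 ih1 ih2 => simp only [add_mul, map_add, ih1, ih2]

lemma conv_lact (χ : H) (hgl : Coalgebra.comul (R := k) χ = χ ⊗ₜ[k] χ)
    (a b : Module.Dual k H) :
    conv k H (lact k H χ a) (lact k H χ b) = lact k H χ (conv k H a b) := by
  apply LinearMap.ext; intro x
  have hmul : Coalgebra.comul (R := k) (x * χ)
      = Coalgebra.comul (R := k) x * (χ ⊗ₜ[k] χ) := by
    rw [← hgl]; exact Bialgebra.comul_mul x χ
  have : lact k H χ (conv k H a b) x
      = (LinearMap.mul' k k ∘ₗ TensorProduct.map a b)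
          (Coalgebra.comul (R := k) x * (χ ⊗ₜ[k] χ)) := by
    simp only [lact, conv, LinearMap.comp_apply, LinearMap.mulRight_apply, hmul]
  rw [this, lact_mul_chi]
  rfl

end AuxLemmas

/-- Bethe subalgebras: for a finite-dimensional quasitriangular bialgebra
`H` with commutative subalgebra of invariants `I ⊆ H*` and a group-like `χ ∈ H`, one has
`χ ⇀ I = I ↼ χ`; the action of `χ` is an algebra map on `I`, so `I_χ := χ ⇀ I` is a
commutative subalgebra of `H*`; and if `χ` is invertible then `a ↦ χ ⇀ a` is injective
on `I`, so `I_χ ≅ I` as algebras. -/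
theorem bethe_subalgebra
    {k H : Type*} [Field k] [Ring H] [Bialgebra k H] [FiniteDimensional k H]
    (R Rinv : H ⊗[k] H) (hR : IsUnivRMatrix k H R Rinv)
    (χ : H) (hgl : Coalgebra.comul (R := k) χ = χ ⊗ₜ[k] χ)
    (hco : Coalgebra.counit (R := k) χ = 1) :
    (fun a => lact k H χ a) '' {a | IsInvariantDual k H a} =
        (fun a => ract k H a χ) '' {a | IsInvariantDual k H a} ∧
    (∀ a b : Module.Dual k H, IsInvariantDual k H a → IsInvariantDual k H b →
      conv k H (lact k H χ a) (lact k H χ b) = lact k H χ (conv k H a b) ∧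
      conv k H (lact k H χ a) (lact k H χ b) = conv k H (lact k H χ b) (lact k H χ a)) ∧
    ((∃ χ' : H, χ * χ' = 1 ∧ χ' * χ = 1) →
      Set.InjOn (fun a => lact k H χ a) {a | IsInvariantDual k H a}) := by
  obtain ⟨h1, h2, _, _, hint⟩ := hR
  refine ⟨?_, ?_, ?_⟩
  · exact Set.image_congr (fun a ha => ha χ)
  · intro a b ha hb
    have hone := conv_lact χ hgl a b
    refine ⟨hone, ?_⟩
    rw [hone, conv_lact χ hgl b a,
      conv_comm_of_invariant R Rinv h1 h2 hint ha hb]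
  · rintro ⟨χ', hl, hr⟩ a _ b _ hab
    apply LinearMap.ext; intro x
    have h1 := LinearMap.congr_fun (congrArg (fun f => f) hab : lact k H χ a = lact k H χ b) (x * χ')
    simp only [lact, LinearMap.comp_apply, LinearMap.mulRight_apply] at h1
    have : x * χ' * χ = x := by rw [mul_assoc, hr, mul_one]
    rwa [this] at h1
end

section
/- Let H₊ be a finite-dimensional Hopf algebra, H₋ = H₊^{*op}, and let D = DH₊ be the quantum double, which as a vector space equals H₊⊗H₋ with both factors embedded as sub-bialgebras and cross relations ⟨ξ⁽¹⁾,x⁽¹⁾⟩ ξ⁽²⁾x⁽²⁾ = x⁽¹⁾ξ⁽¹⁾ ⟨ξ⁽²⁾,x⁽²⁾⟩ for ξ ∈ H₋, x ∈ H₊. Let {e_μ} be a basis of H₊ with dual basis {e^μ} of H₊*. Then the canonical element T ∈ D ⊗ D* factorizes as T = (Σ_μ e_μ ⊗ e^μ)·(Σ_ν e^ν ⊗ e_ν). -/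
open TensorProduct

section DoubleDef

variable (k Hp : Type*) [Field k] [Ring Hp] [HopfAlgebra k Hp] [FiniteDimensional k Hp]

/-- dual comultiplication on `H₊*` (dual to the multiplication of `H₊`). -/
noncomputable def comulDual :
    Module.Dual k Hp →ₗ[k] Module.Dual k Hp ⊗[k] Module.Dual k Hp :=
  (TensorProduct.dualDistribEquiv k Hp Hp).symm.toLinearMap ∘ₗ
    (LinearMap.mul' k Hp).dualMap

variable (D : Type*) [Ring D] [Bialgebra k D]

/-- left-hand side `⟨ξ⁽¹⁾,x⁽¹⁾⟩ ξ⁽²⁾ x⁽²⁾` of the cross relation of the double,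
for embeddings `iP : H₊ → D`, `iM : H₊* → D`. -/
noncomputable def crossLHS (iP : Hp →ₗ[k] D) (iM : Module.Dual k Hp →ₗ[k] D)
    (ξ : Module.Dual k Hp) (x : Hp) : D :=
  (TensorProduct.lid k D)
    ((TensorProduct.map (contractLeft k Hp) ((LinearMap.mul' k D) ∘ₗ TensorProduct.map iM iP))
      ((TensorProduct.tensorTensorTensorComm k (Module.Dual k Hp) (Module.Dual k Hp) Hp Hp)
        ((comulDual k Hp ξ) ⊗ₜ[k] (Coalgebra.comul (R := k) x))))

/-- right-hand side `x⁽¹⁾ ξ⁽¹⁾ ⟨ξ⁽²⁾,x⁽²⁾⟩` of the cross relation of the double. -/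
noncomputable def crossRHS (iP : Hp →ₗ[k] D) (iM : Module.Dual k Hp →ₗ[k] D)
    (ξ : Module.Dual k Hp) (x : Hp) : D :=
  (TensorProduct.rid k D)
    ((TensorProduct.map
        ((LinearMap.mul' k D) ∘ₗ TensorProduct.map iP iM ∘ₗ
          (TensorProduct.comm k (Module.Dual k Hp) Hp).toLinearMap)
        (contractLeft k Hp))
      ((TensorProduct.tensorTensorTensorComm k (Module.Dual k Hp) (Module.Dual k Hp) Hp Hp)
        ((comulDual k Hp ξ) ⊗ₜ[k] (Coalgebra.comul (R := k) x))))

/-- the multiplication map `H₊ ⊗ H₋ → D`, `x ⊗ ξ ↦ iP(x) · iM(ξ)`. -/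
noncomputable def thetaMap (iP : Hp →ₗ[k] D) (iM : Module.Dual k Hp →ₗ[k] D) :
    Hp ⊗[k] Module.Dual k Hp →ₗ[k] D :=
  (LinearMap.mul' k D) ∘ₗ TensorProduct.map iP iM

/-- Axiomatization of the quantum double `D = D H₊` of a finite-dimensional Hopf
algebra `H₊`:  a bialgebra containing `H₊` and `H₋ = H₊^{*op}` as sub-bialgebras,
subject to the standard cross relations, and factorizing as `H₊ ⊗ H₋` as a vector
space (via multiplication). -/
structure DoubleSetup where
  iP : Hp →ₗ[k] D
  iM : Module.Dual k Hp →ₗ[k] D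
  iP_mul : ∀ x y : Hp, iP (x * y) = iP x * iP y
  iP_one : iP 1 = 1
  iP_comul : Coalgebra.comul (R := k) ∘ₗ iP = TensorProduct.map iP iP ∘ₗ Coalgebra.comul
  iP_counit : Coalgebra.counit (R := k) ∘ₗ iP = Coalgebra.counit
  iM_mul : ∀ ξ η : Module.Dual k Hp, iM (conv k Hp η ξ) = iM ξ * iM η
  iM_one : iM (Coalgebra.counit (R := k) (A := Hp)) = 1
  iM_comul : Coalgebra.comul (R := k) ∘ₗ iM = TensorProduct.map iM iM ∘ₗ comulDual k Hp
  iM_counit : ∀ ξ : Module.Dual k Hp, Coalgebra.counit (R := k) (iM ξ) = ξ 1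
  cross : ∀ (ξ : Module.Dual k Hp) (x : Hp),
    crossLHS k Hp D iP iM ξ x = crossRHS k Hp D iP iM ξ x
  theta_bij : Function.Bijective (thetaMap k Hp D iP iM)

end DoubleDef

section CanEl

variable (k D : Type*) [Field k] [Ring D] [Bialgebra k D]

/-- the convolution product of the dual algebra `D*` as a linear map on the tensor
square of `D*`. -/
noncomputable def convLift : Module.Dual k D ⊗[k] Module.Dual k D →ₗ[k] Module.Dual k D :=
  (Coalgebra.comul (R := k) (A := D)).dualMap ∘ₗ TensorProduct.dualDistrib k D D

/-- the product of the algebra `D ⊗ D*` (componentwise, with convolution on `D*`). -/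
noncomputable def mulTD (X Y : D ⊗[k] Module.Dual k D) : D ⊗[k] Module.Dual k D :=
  (TensorProduct.map (LinearMap.mul' k D) (convLift k D))
    ((TensorProduct.tensorTensorTensorComm k D (Module.Dual k D) D (Module.Dual k D))
      (X ⊗ₜ[k] Y))

end CanEl


section AuxLemmas

variable {k Hp : Type*} [Field k] [Ring Hp] [HopfAlgebra k Hp] [FiniteDimensional k Hp]

lemma dualDistrib_dualDistribEquiv_symm (z : Module.Dual k (Hp ⊗[k] Hp)) :
    TensorProduct.dualDistrib k Hp Hp ((TensorProduct.dualDistribEquiv k Hp Hp).symm z) = z := by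
  have h := (TensorProduct.dualDistribEquiv k Hp Hp).apply_symm_apply z
  rwa [TensorProduct.dualDistribEquiv, TensorProduct.dualDistribEquivOfBasis,
    LinearEquiv.ofLinear_apply] at h

lemma dualDistrib_comulDual (ξ : Module.Dual k Hp) :
    TensorProduct.dualDistrib k Hp Hp (comulDual k Hp ξ) = (LinearMap.mul' k Hp).dualMap ξ :=
  dualDistrib_dualDistribEquiv_symm _

lemma lid_rTensor_comulDual (ξ : Module.Dual k Hp) :
    (TensorProduct.lid k (Module.Dual k Hp))
      ((LinearMap.rTensor (Module.Dual k Hp) (LinearMap.applyₗ (1 : Hp)))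
        (comulDual k Hp ξ)) = ξ := by
  apply LinearMap.ext; intro a
  have key : ∀ z : Module.Dual k Hp ⊗[k] Module.Dual k Hp,
      (TensorProduct.lid k (Module.Dual k Hp))
        ((LinearMap.rTensor (Module.Dual k Hp) (LinearMap.applyₗ (1 : Hp))) z) a =
      TensorProduct.dualDistrib k Hp Hp z ((1 : Hp) ⊗ₜ[k] a) := by
    intro z
    induction z using TensorProduct.induction_on with
    | zero => simp
    | tmul f g => simp [TensorProduct.dualDistrib_apply]
    | add u v hu hv => simp [map_add, hu, hv, LinearMap.add_apply]
  rw [key, dualDistrib_comulDual]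
  simp [LinearMap.mul'_apply]

end AuxLemmas

set_option maxHeartbeats 2000000 in
set_option synthInstance.maxHeartbeats 400000 in
/-- let `D = D H₊` be the quantum double of a finite-dimensional Hopf
algebra `H₊` and `{e_μ}` a basis of `H₊` with dual basis `{e^μ}`.  The canonical element
`T ∈ D ⊗ D*` (characterized by `(id ⊗ ev_d)(T) = d` for all `d ∈ D`) factorizes as
`T = (Σ_μ e_μ ⊗ e^μ) · (Σ_ν e^ν ⊗ e_ν)`, where in the first factor `e^μ ∈ H₊*` sits in
`D*` via `f ↦ (f ⊗ ε₋) ∘ θ⁻¹` and in the second `e_ν ∈ H₊` sits in `D*` via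
`v ↦ (ε₊ ⊗ ev_v) ∘ θ⁻¹`, with `θ : H₊ ⊗ H₋ ≃ D` the vector-space factorization of the
double given by multiplication. -/
theorem double_T_factorization
    {k Hp D : Type*} [Field k] [Ring Hp] [HopfAlgebra k Hp] [FiniteDimensional k Hp]
    [Ring D] [Bialgebra k D]
    (S : DoubleSetup k Hp D)
    {ι : Type*} [Fintype ι] [DecidableEq ι] (b : Module.Basis ι k Hp)
    (T : D ⊗[k] Module.Dual k D)
    (hT : ∀ d : D, (TensorProduct.rid k D)
      ((TensorProduct.map LinearMap.id (LinearMap.applyₗ d)) T) = d) :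
    letI θinv : D →ₗ[k] Hp ⊗[k] Module.Dual k Hp :=
      (LinearEquiv.ofBijective (thetaMap k Hp D S.iP S.iM) S.theta_bij).symm.toLinearMap
    letI j₁ : Module.Dual k Hp → Module.Dual k D := fun f =>
      (LinearMap.mul' k k) ∘ₗ
        (TensorProduct.map f (LinearMap.applyₗ (1 : Hp))) ∘ₗ θinv
    letI j₂ : Hp → Module.Dual k D := fun v =>
      (LinearMap.mul' k k) ∘ₗ
        (TensorProduct.map (Coalgebra.counit (R := k) (A := Hp)) (LinearMap.applyₗ v)) ∘ₗ θinv
    T = mulTD k D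
        (∑ μ : ι, S.iP (b μ) ⊗ₜ[k] j₁ (b.coord μ))
        (∑ ν : ι, S.iM (b.coord ν) ⊗ₜ[k] j₂ (b ν)) := by
  classical
  set θinv : D →ₗ[k] Hp ⊗[k] Module.Dual k Hp :=
    (LinearEquiv.ofBijective (thetaMap k Hp D S.iP S.iM) S.theta_bij).symm.toLinearMap with hθv
  set j₁ : Module.Dual k Hp → Module.Dual k D := fun f =>
    (LinearMap.mul' k k) ∘ₗ (TensorProduct.map f (LinearMap.applyₗ (1 : Hp))) ∘ₗ θinv with hj1v
  set j₂ : Hp → Module.Dual k D := fun v =>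
    (LinearMap.mul' k k) ∘ₗ
      (TensorProduct.map (Coalgebra.counit (R := k) (A := Hp)) (LinearMap.applyₗ v)) ∘ₗ θinv
    with hj2v
  haveI hfd : FiniteDimensional k D :=
    Module.Finite.of_surjective (thetaMap k Hp D S.iP S.iM) S.theta_bij.surjective
  -- evaluation of elements of `D ⊗ D*` as endomorphisms of `D`
  have e1 : ∀ (t : D ⊗[k] Module.Dual k D) (d : D),
      (TensorProduct.rid k D) ((TensorProduct.map LinearMap.id (LinearMap.applyₗ d)) t) =
        dualTensorHom k D D ((TensorProduct.comm k D (Module.Dual k D)) t) d := by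
    intro t d
    induction t using TensorProduct.induction_on with
    | zero => simp
    | tmul x f => simp [dualTensorHom_apply]
    | add u v hu hv => simp [map_add, hu, hv]
  -- values of j₁ and j₂
  have hθ : ∀ (x : Hp) (ξ : Module.Dual k Hp),
      θinv (S.iP x * S.iM ξ) = x ⊗ₜ[k] ξ := by
    intro x ξ
    have h : thetaMap k Hp D S.iP S.iM (x ⊗ₜ[k] ξ) = S.iP x * S.iM ξ := by
      simp [thetaMap, LinearMap.mul'_apply]
    show (LinearEquiv.ofBijective (thetaMap k Hp D S.iP S.iM) S.theta_bij).symm _ = _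
    rw [← h]
    exact (LinearEquiv.ofBijective (thetaMap k Hp D S.iP S.iM) S.theta_bij).symm_apply_apply _
  have hj₁ : ∀ (f : Module.Dual k Hp) (x : Hp) (ξ : Module.Dual k Hp),
      j₁ f (S.iP x * S.iM ξ) = f x * ξ 1 := by
    intro f x ξ
    show (LinearMap.mul' k k)
      ((TensorProduct.map f (LinearMap.applyₗ (1 : Hp))) (θinv (S.iP x * S.iM ξ))) = _
    rw [hθ]
    simp [LinearMap.mul'_apply]
  have hj₂ : ∀ (v : Hp) (x : Hp) (ξ : Module.Dual k Hp),
      j₂ v (S.iP x * S.iM ξ) = Coalgebra.counit (R := k) x * ξ v := by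
    intro v x ξ
    show (LinearMap.mul' k k)
      ((TensorProduct.map (Coalgebra.counit (R := k) (A := Hp)) (LinearMap.applyₗ v))
        (θinv (S.iP x * S.iM ξ))) = _
    rw [hθ]
    simp [LinearMap.mul'_apply]
  -- the main computation
  have main : ∀ (u : Hp ⊗[k] Hp) (v : Module.Dual k Hp ⊗[k] Module.Dual k Hp),
      (∑ μ : ι, ∑ ν : ι,
        (TensorProduct.dualDistrib k D D (j₁ (b.coord μ) ⊗ₜ[k] j₂ (b ν)))
          ((TensorProduct.map S.iP S.iP) u * (TensorProduct.map S.iM S.iM) v) •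
          (S.iP (b μ) * S.iM (b.coord ν)))
      = S.iP ((TensorProduct.rid k Hp)
            ((LinearMap.lTensor Hp (Coalgebra.counit (R := k))) u)) *
        S.iM ((TensorProduct.lid k (Module.Dual k Hp))
            ((LinearMap.rTensor (Module.Dual k Hp) (LinearMap.applyₗ (1 : Hp))) v)) := by
    intro u v
    induction u using TensorProduct.induction_on with
    | zero => simp only [map_zero, zero_mul, zero_smul, Finset.sum_const_zero]
    | add u1 u2 h1 h2 =>
      simp only [map_add, add_mul, mul_add, add_smul, Finset.sum_add_distrib, h1, h2]
    | tmul x1 x2 =>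
      induction v using TensorProduct.induction_on with
      | zero => simp only [map_zero, mul_zero, smul_zero, zero_smul, Finset.sum_const_zero]
      | add v1 v2 h1 h2 =>
        simp only [map_add, add_mul, mul_add, add_smul, Finset.sum_add_distrib, h1, h2]
      | tmul ξ1 ξ2 =>
        simp only [TensorProduct.map_tmul, Algebra.TensorProduct.tmul_mul_tmul,
          TensorProduct.dualDistrib_apply, hj₁, hj₂, LinearMap.lTensor_tmul,
          TensorProduct.rid_tmul, LinearMap.rTensor_tmul, TensorProduct.lid_tmul,
          map_smul, LinearMap.applyₗ_apply_apply]
        rw [smul_mul_smul_comm]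
        have h1 : S.iP x1 = ∑ μ : ι, b.coord μ x1 • S.iP (b μ) := by
          conv_lhs => rw [← b.sum_repr x1]
          rw [map_sum]; simp only [map_smul, Module.Basis.coord_apply]
        have h2 : S.iM ξ2 = ∑ ν : ι, ξ2 (b ν) • S.iM (b.coord ν) := by
          calc S.iM ξ2 = S.iM (∑ ν : ι, ξ2 (b ν) • b.coord ν) := by
                rw [b.sum_dual_apply_smul_coord]
            _ = _ := by rw [map_sum]; simp only [map_smul]
        rw [h1, h2, Finset.sum_mul_sum, Finset.smul_sum]
        refine Finset.sum_congr rfl fun μ _ => ?_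
        rw [Finset.smul_sum]
        refine Finset.sum_congr rfl fun ν _ => ?_
        rw [smul_mul_smul_comm, smul_smul]
        congr 1
        ring
  -- the right-hand side also satisfies the canonical-element property
  have key : ∀ d : D,
      (TensorProduct.rid k D) ((TensorProduct.map LinearMap.id (LinearMap.applyₗ d))
        (mulTD k D (∑ μ : ι, S.iP (b μ) ⊗ₜ[k] j₁ (b.coord μ))
          (∑ ν : ι, S.iM (b.coord ν) ⊗ₜ[k] j₂ (b ν)))) = d := by
    intro d
    obtain ⟨t, rfl⟩ := S.theta_bij.surjective d
    rw [e1]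
    induction t using TensorProduct.induction_on with
    | zero => simp
    | add u v hu hv => simp only [map_add, hu, hv]
    | tmul x ξ =>
      have hd : thetaMap k Hp D S.iP S.iM (x ⊗ₜ[k] ξ) = S.iP x * S.iM ξ := by
        simp [thetaMap, LinearMap.mul'_apply]
      rw [hd, ← e1]
      have expand : mulTD k D (∑ μ : ι, S.iP (b μ) ⊗ₜ[k] j₁ (b.coord μ))
          (∑ ν : ι, S.iM (b.coord ν) ⊗ₜ[k] j₂ (b ν)) =
          ∑ μ : ι, ∑ ν : ι, (S.iP (b μ) * S.iM (b.coord ν)) ⊗ₜ[k]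
            convLift k D (j₁ (b.coord μ) ⊗ₜ[k] j₂ (b ν)) := by
        simp [mulTD, TensorProduct.sum_tmul, TensorProduct.tmul_sum, map_sum,
          TensorProduct.tensorTensorTensorComm_tmul, LinearMap.mul'_apply]
        exact Finset.sum_comm
      rw [expand]
      have hconv : ∀ (f g : Module.Dual k D) (d : D),
          convLift k D (f ⊗ₜ[k] g) d =
            TensorProduct.dualDistrib k D D (f ⊗ₜ[k] g) (Coalgebra.comul (R := k) d) := by
        intro f g d; rfl
      have hcomP : Coalgebra.comul (R := k) (S.iP x) =
          (TensorProduct.map S.iP S.iP) (Coalgebra.comul (R := k) x) := by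
        have := LinearMap.congr_fun S.iP_comul x
        simpa using this
      have hcomM : Coalgebra.comul (R := k) (S.iM ξ) =
          (TensorProduct.map S.iM S.iM) (comulDual k Hp ξ) := by
        have := LinearMap.congr_fun S.iM_comul ξ
        simpa using this
      simp only [map_sum, TensorProduct.map_tmul, LinearMap.id_coe, id_eq,
        LinearMap.applyₗ_apply_apply, TensorProduct.rid_tmul, hconv,
        Bialgebra.comul_mul, hcomP, hcomM]
      rw [main (Coalgebra.comul (R := k) x) (comulDual k Hp ξ)]
      rw [lid_rTensor_comulDual]
      congr 1
      rw [Coalgebra.lTensor_counit_comul]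
      simp
  -- conclude by injectivity of the evaluation map
  have hinj : Function.Injective
      (fun t : D ⊗[k] Module.Dual k D =>
        dualTensorHom k D D ((TensorProduct.comm k D (Module.Dual k D)) t)) := by
    intro s t hst
    apply (TensorProduct.comm k D (Module.Dual k D)).injective
    have hb := Module.Free.chooseBasis k D
    have := congrArg (dualTensorHomEquivOfBasis (N := D) hb).symm hst
    rwa [dualTensorHomEquivOfBasis_symm_cancel_left,
      dualTensorHomEquivOfBasis_symm_cancel_left] at this
  apply hinj
  apply LinearMap.ext
  intro d
  simp only []
  rw [← e1, ← e1, hT d, key d]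
end
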